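/- Let R(H) ⊆ M(H) be convex, S(L) ⊆ M(L), and R_n(H) = {μ ∈ R(H) : card(supp μ) ≤ n}. Then for all m, n ≥ 1, q(R_{m+n}(H), S(L)) ≤ (m/(m+n)) · q(R_m(H), S(L)) + (n/(m+n)) · q(R_n(H), S(L)); consequently the sequence n ↦ q(R_n(H), S(L)) is quasi-decreasing and converges (in the extended reals) as n → ∞. -/

import Mathlib

open MeasureTheory Topology Filter ENNReal

noncomputable section

/-- The vague topology on measures: the coarsest topology making
`μ ↦ ∫ f dμ` continuous for every continuous compactly supported `f`. -/
def vagueTop (X : Type*) [TopologicalSpace X] [MeasurableSpace X] :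
    TopologicalSpace (Measure X) :=
  ⨅ (f : X → ℝ) (_ : Continuous f) (_ : HasCompactSupport f),
    TopologicalSpace.induced (fun μ : Measure X => ∫ x, f x ∂μ) inferInstance

/-- `μ` is concentrated on `H`: every compact set meets the complement of `H`
in a set of zero (outer) measure. -/
def Concentrated {X : Type*} [TopologicalSpace X] [MeasurableSpace X]
    (μ : Measure X) (H : Set X) : Prop :=
  ∀ K : Set X, IsCompact K → μ (K ∩ Hᶜ) = 0

/-- `M(H)`: the positive regular Radon measures of finite total mass concentrated on `H`. -/
def MM {X : Type*} [TopologicalSpace X] [MeasurableSpace X] (H : Set X) :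
    Set (Measure X) :=
  {μ | IsFiniteMeasure μ ∧ μ.Regular ∧ μ.InnerRegular ∧ Concentrated μ H}

/-- `M₁(H)`: probability measures in `M(H)`. -/
def M1 {X : Type*} [TopologicalSpace X] [MeasurableSpace X] (H : Set X) :
    Set (Measure X) :=
  {μ ∈ MM H | IsProbabilityMeasure μ}

/-- The potential `U^μ(y) = ∫ k(x,y) dμ(x)`. -/
def pot {X Y : Type*} [MeasurableSpace X] (k : X → Y → ℝ≥0∞) (μ : Measure X) (y : Y) : ℝ≥0∞ :=
  ∫⁻ x, k x y ∂μ

/-- The mutual energy `E(μ,ν) = ∫∫ k(x,y) dμ(x)dν(y)`. -/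
def energy {X Y : Type*} [MeasurableSpace X] [MeasurableSpace Y] (k : X → Y → ℝ≥0∞)
    (μ : Measure X) (ν : Measure Y) : ℝ≥0∞ :=
  ∫⁻ p : X × Y, k p.1 p.2 ∂(μ.prod ν)

/-- `q(R,S) = inf_{μ∈R} sup_{ν∈S} E(μ,ν)`. -/
def qup {X Y : Type*} [MeasurableSpace X] [MeasurableSpace Y] (k : X → Y → ℝ≥0∞)
    (R : Set (Measure X)) (S : Set (Measure Y)) : ℝ≥0∞ :=
  ⨅ μ ∈ R, ⨆ ν ∈ S, energy k μ ν

/-- `q̲(R,S) = sup_{μ∈R} inf_{ν∈S} E(μ,ν)`. -/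
def qlow {X Y : Type*} [MeasurableSpace X] [MeasurableSpace Y] (k : X → Y → ℝ≥0∞)
    (R : Set (Measure X)) (S : Set (Measure Y)) : ℝ≥0∞ :=
  ⨆ μ ∈ R, ⨅ ν ∈ S, energy k μ ν

/-- The (Wiener) energy of a set of measures: `w(R) = inf_{μ∈R} E(μ,μ)`. -/
def ww {X : Type*} [MeasurableSpace X] (k : X → X → ℝ≥0∞) (R : Set (Measure X)) : ℝ≥0∞ :=
  ⨅ μ ∈ R, energy k μ μ

/-- Convexity of a set of measures. -/
def ConvexM {X : Type*} [MeasurableSpace X] (R : Set (Measure X)) : Prop :=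
  ∀ μ ∈ R, ∀ ν ∈ R, ∀ a b : ℝ≥0∞, a + b = 1 → a • μ + b • ν ∈ R

/-- The extreme points of a set of measures. -/
def ExtremePts {X : Type*} [MeasurableSpace X] (R : Set (Measure X)) : Set (Measure X) :=
  {σ ∈ R | ∀ μ ∈ R, ∀ ν ∈ R, ∀ a b : ℝ≥0∞, 0 < a → 0 < b → a + b = 1 →
    σ = a • μ + b • ν → σ = μ ∧ σ = ν}

/-- `w*`-compactness (= compactness in the vague topology, these coincide on compact sets). -/
def VCompact {X : Type*} [TopologicalSpace X] [MeasurableSpace X] (R : Set (Measure X)) : Prop :=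
  @IsCompact _ (vagueTop X) R

/-- The (topological) support of a measure. -/
def msupp {X : Type*} [TopologicalSpace X] [MeasurableSpace X] (μ : Measure X) : Set X :=
  {x | ∀ U ∈ 𝓝 x, 0 < μ U}

/-- A measure has compact support. -/
def CompactSupp {X : Type*} [TopologicalSpace X] [MeasurableSpace X] (μ : Measure X) : Prop :=
  ∃ K : Set X, IsCompact K ∧ μ Kᶜ = 0

/-- Frostman's maximum principle. -/
def Frostman {X : Type*} [TopologicalSpace X] [MeasurableSpace X] (k : X → X → ℝ≥0∞) : Prop :=
  ∀ μ : Measure X, μ ∈ MM (Set.univ : Set X) → CompactSupp μ →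
    (⨆ x, pot k μ x) = ⨆ x ∈ msupp μ, pot k μ x

/-- An appropriate set of measures. -/
def Appropriate {X : Type*} [TopologicalSpace X] [MeasurableSpace X] (k : X → X → ℝ≥0∞)
    (H : Set X) (R : Set (Measure X)) : Prop :=
  ∀ μ ∈ R, energy k μ μ ≠ ⊤ → ∀ t : ℝ≥0∞,
    (∀ ν ∈ R, energy k ν ν ≠ ⊤ → (∃ K : Set X, IsCompact K ∧ K ⊆ H ∧ ν Kᶜ = 0) →
      t ≤ energy k ν μ) →
    ∀ᵐ x ∂μ, x ∈ H → t ≤ pot k μ x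

/-- `R_n`: the measures of `R` whose support has at most `n` points. -/
def Rn {X : Type*} [TopologicalSpace X] [MeasurableSpace X]
    (R : Set (Measure X)) (n : ℕ) : Set (Measure X) :=
  {μ ∈ R | ∃ s : Finset X, msupp μ ⊆ ↑s ∧ s.card ≤ n}

/-- `R^e_{Φ,g,A}`: probability measures satisfying the moment equality constraints on `A`. -/
def Re {X Z : Type*} [MeasurableSpace X] (Φ : X → Z → ℝ) (g : Z → ℝ) (A : Set Z) :
    Set (Measure X) :=
  {μ | IsProbabilityMeasure μ ∧ ∀ z ∈ A, ∫ x, Φ x z ∂μ = g z}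

/-! The convex combination `(m/(m+n)) μ + (n/(m+n)) ν` of `μ ∈ R_m` and `ν ∈ R_n` is supported on
the union of the two supports, hence lies in `R_{m+n}`, and the mutual energy is affine in its first
argument. Since `R_n` grows with `n`, the constants `q(R_n, S)` decrease and converge to their
infimum. -/

section Support

variable {X : Type*} [TopologicalSpace X] [MeasurableSpace X]

lemma msupp_smul_subset (c : ℝ≥0∞) (μ : Measure X) : msupp (c • μ) ⊆ msupp μ :=
  fun _ hx U hU => (ENNReal.mul_pos_iff.1 (hx U hU)).2

lemma msupp_add_subset (μ ν : Measure X) : msupp (μ + ν) ⊆ msupp μ ∪ msupp ν := by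
  intro x hx
  by_contra hout
  simp only [Set.mem_union, msupp, Set.mem_ofPred_eq, not_or, not_forall, not_lt,
    nonpos_iff_eq_zero] at hout
  obtain ⟨⟨U, hU, hμU⟩, ⟨V, hV, hνV⟩⟩ := hout
  have hpos := hx (U ∩ V) (inter_mem hU hV)
  rw [Measure.add_apply, measure_mono_null Set.inter_subset_left hμU,
    measure_mono_null Set.inter_subset_right hνV, add_zero] at hpos
  exact hpos.ne' rfl

lemma Rn_mono (R : Set (Measure X)) : Monotone (Rn R) :=
  fun _ _ hmn _ ⟨hμR, s, hμs, hs⟩ => ⟨hμR, s, hμs, hs.trans hmn⟩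

lemma smul_add_smul_mem_Rn_add {R : Set (Measure X)} (hR : ConvexM R) {m n : ℕ}
    {μ ν : Measure X} (hμ : μ ∈ Rn R m) (hν : ν ∈ Rn R n) {a b : ℝ≥0∞} (hab : a + b = 1) :
    a • μ + b • ν ∈ Rn R (m + n) := by
  classical
  obtain ⟨hμR, s, hμs, hs⟩ := hμ
  obtain ⟨hνR, t, hνt, ht⟩ := hν
  refine ⟨hR μ hμR ν hνR a b hab, s ∪ t, ?_, (Finset.card_union_le s t).trans (by omega)⟩
  calc msupp (a • μ + b • ν) ⊆ msupp (a • μ) ∪ msupp (b • ν) := msupp_add_subset _ _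
    _ ⊆ msupp μ ∪ msupp ν :=
      Set.union_subset_union (msupp_smul_subset a μ) (msupp_smul_subset b ν)
    _ ⊆ ↑(s ∪ t) := by
      rw [Finset.coe_union]
      exact Set.union_subset_union hμs hνt

end Support

section Energy

variable {X Y : Type*} [MeasurableSpace X] [MeasurableSpace Y]

lemma energy_smul_add_smul (k : X → Y → ℝ≥0∞) (a b : ℝ≥0∞) (μ ν : Measure X) (τ : Measure Y)
    [SFinite μ] [SFinite ν] [SFinite τ] :
    energy k (a • μ + b • ν) τ = a * energy k μ τ + b * energy k ν τ := by
  simp only [energy, Measure.add_prod, Measure.prod_smul_left, lintegral_add_measure,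
    lintegral_smul_measure, smul_eq_mul]

lemma iSup_energy_smul_add_smul_le (k : X → Y → ℝ≥0∞) (a b : ℝ≥0∞) (μ ν : Measure X)
    [SFinite μ] [SFinite ν] {S : Set (Measure Y)} (hS : ∀ τ ∈ S, SFinite τ) :
    ⨆ τ ∈ S, energy k (a • μ + b • ν) τ ≤
      (a * ⨆ τ ∈ S, energy k μ τ) + b * ⨆ τ ∈ S, energy k ν τ := by
  refine iSup₂_le fun τ hτ => ?_
  have := hS τ hτ
  rw [energy_smul_add_smul]
  exact add_le_add (mul_le_mul_right (le_iSup₂ (f := fun τ _ => energy k μ τ) τ hτ) a)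
    (mul_le_mul_right (le_iSup₂ (f := fun τ _ => energy k ν τ) τ hτ) b)

end Energy

section Chebyshev

variable {X Y : Type*} [TopologicalSpace X] [MeasurableSpace X] [MeasurableSpace Y]

lemma qup_Rn_add_le (k : X → Y → ℝ≥0∞) {R : Set (Measure X)} {S : Set (Measure Y)}
    (hR : ∀ μ ∈ R, SFinite μ) (hRconv : ConvexM R) (hS : ∀ τ ∈ S, SFinite τ) (m n : ℕ)
    {a b : ℝ≥0∞} (ha : a ≠ 0) (hb : b ≠ 0) (hab : a + b = 1) :
    qup k (Rn R (m + n)) S ≤ a * qup k (Rn R m) S + b * qup k (Rn R n) S := by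
  have ha_top : a ≠ ⊤ := ne_top_of_le_ne_top one_ne_top (hab ▸ le_self_add)
  have hb_top : b ≠ ⊤ := ne_top_of_le_ne_top one_ne_top (hab ▸ le_add_self)
  calc qup k (Rn R (m + n)) S
      ≤ ⨅ μ ∈ Rn R m, ⨅ ν ∈ Rn R n,
          (a * ⨆ τ ∈ S, energy k μ τ) + b * ⨆ τ ∈ S, energy k ν τ := by
        refine le_iInf₂ fun μ hμ => le_iInf₂ fun ν hν => ?_
        have := hR μ hμ.1
        have := hR ν hν.1
        exact (iInf₂_le _ (smul_add_smul_mem_Rn_add hRconv hμ hν hab)).trans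
          (iSup_energy_smul_add_smul_le k a b μ ν hS)
    _ = a * qup k (Rn R m) S + b * qup k (Rn R n) S := by
        simp only [qup, ENNReal.mul_iInf_of_ne ha ha_top, ENNReal.mul_iInf_of_ne hb hb_top]
        simp only [ENNReal.iInf_add]
        simp only [ENNReal.add_iInf]

lemma antitone_qup_Rn (k : X → Y → ℝ≥0∞) (R : Set (Measure X)) (S : Set (Measure Y)) :
    Antitone fun n => qup k (Rn R n) S :=
  fun _ _ hmn => biInf_mono fun _ hμ => Rn_mono R hmn hμ

end Chebyshev

theorem statement15_general {X Y : Type*} [TopologicalSpace X] [MeasurableSpace X]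
    [TopologicalSpace Y] [MeasurableSpace Y]
    (k : X → Y → ℝ≥0∞)
    (H : Set X) (L : Set Y)
    (R : Set (Measure X)) (S : Set (Measure Y))
    (hR : R ⊆ MM H) (hRconv : ConvexM R) (hS : S ⊆ MM L) :
    (∀ m n : ℕ, 1 ≤ m → 1 ≤ n →
      qup k (Rn R (m + n)) S ≤
        (m : ℝ≥0∞) / ((m : ℝ≥0∞) + (n : ℝ≥0∞)) * qup k (Rn R m) S +
          (n : ℝ≥0∞) / ((m : ℝ≥0∞) + (n : ℝ≥0∞)) * qup k (Rn R n) S) ∧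
    ∃ l : ℝ≥0∞, Filter.Tendsto (fun n => qup k (Rn R n) S) Filter.atTop (𝓝 l) := by
  refine ⟨fun m n hm hn => ?_,
    ⟨_, tendsto_atTop_iInf (antitone_qup_Rn k R S)⟩⟩
  have hsum_ne_zero : (m : ℝ≥0∞) + n ≠ 0 := by
    simp only [ne_eq, add_eq_zero, Nat.cast_eq_zero, not_and]; omega
  have hsum_ne_top : (m : ℝ≥0∞) + n ≠ ⊤ := by simp [ENNReal.add_eq_top]
  refine qup_Rn_add_le k (fun μ hμ => have := (hR hμ).1; inferInstance) hRconv
    (fun τ hτ => have := (hS hτ).1; inferInstance) m n ?_ ?_ ?_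
  · simp only [ne_eq, ENNReal.div_eq_zero_iff, Nat.cast_eq_zero, hsum_ne_top, or_false]; omega
  · simp only [ne_eq, ENNReal.div_eq_zero_iff, Nat.cast_eq_zero, hsum_ne_top, or_false]; omega
  · rw [ENNReal.div_add_div_same, ENNReal.div_self hsum_ne_zero hsum_ne_top]

/-- subadditivity of the dual Chebyshev constants
`q(R_{m+n}(H), S(L)) ≤ (m/(m+n)) q(R_m(H), S(L)) + (n/(m+n)) q(R_n(H), S(L))`,
hence the sequence of dual Chebyshev constants converges in the extended reals. -/
theorem statement15 {X Y : Type*} [TopologicalSpace X] [MeasurableSpace X] [BorelSpace X]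
    [LocallyCompactSpace X] [T2Space X]
    [TopologicalSpace Y] [MeasurableSpace Y] [BorelSpace Y]
    [LocallyCompactSpace Y] [T2Space Y]
    (k : X → Y → ℝ≥0∞) (hk : LowerSemicontinuous fun p : X × Y => k p.1 p.2)
    (H : Set X) (L : Set Y)
    (R : Set (Measure X)) (S : Set (Measure Y))
    (hR : R ⊆ MM H) (hRconv : ConvexM R) (hS : S ⊆ MM L) :
    (∀ m n : ℕ, 1 ≤ m → 1 ≤ n →
      qup k (Rn R (m + n)) S ≤
        (m : ℝ≥0∞) / ((m : ℝ≥0∞) + (n : ℝ≥0∞)) * qup k (Rn R m) S +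
          (n : ℝ≥0∞) / ((m : ℝ≥0∞) + (n : ℝ≥0∞)) * qup k (Rn R n) S) ∧
    ∃ l : ℝ≥0∞, Filter.Tendsto (fun n => qup k (Rn R n) S) Filter.atTop (𝓝 l) :=
  statement15_general k H L R S hR hRconv hS
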